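/- Let H be a complex Hilbert space and T a densely defined closed simple symmetric operator in H. Let a, b, c, d be real numbers with ad − bc = 1, and define G := {(c·Tx + d·x, a·Tx + b·x) : x ∈ D(T)} ⊆ H × H. Then: (1) for x ∈ D(T), c·Tx + d·x = 0 implies x = 0, so G is the graph of a linear operator S with domain {c·Tx + d·x : x ∈ D(T)}; (2) S is symmetric, i.e. ⟨Su, v⟩ = ⟨u, Sv⟩ for all u, v in the domain of S; (3) G is closed in H × H; and (4) S is simple in the relation sense: the closed linear span of the union over all μ ∈ ℂ with Im μ ≠ 0 of {u ∈ H : (u, μ·u) ∈ G^⊛} equals H, where G^⊛ := {(u,v) ∈ H × H : ⟨y, u⟩ = ⟨x, v⟩ for all (x,y) ∈ G}. -/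

import Mathlib

noncomputable section

open Complex

variable {H : Type*} [NormedAddCommGroup H] [InnerProductSpace ℂ H] [CompleteSpace H]

/-- The deficiency subspace `ker(T* − λ) = {x ∈ D(T*) : T*x = λx}` of `H`. -/
def defect (T : H →ₗ.[ℂ] H) (lam : ℂ) : Submodule ℂ H :=
  Submodule.map T.adjoint.domain.subtype
    (LinearMap.ker (T.adjoint.toFun - lam • T.adjoint.domain.subtype))

/-- The Möbius transform graph `G = {(c·Tx + d·x, a·Tx + b·x) : x ∈ D(T)}`. -/
def mobiusGraph (T : H →ₗ.[ℂ] H) (a b c d : ℝ) : Set (H × H) :=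
  {p : H × H | ∃ x : T.domain,
    p = ((c : ℂ) • T x + (d : ℂ) • (x : H), (a : ℂ) • T x + (b : ℂ) • (x : H))}

/-- The adjoint linear relation `G^⊛ = {(u,v) : ⟨y,u⟩ = ⟨x,v⟩ for all (x,y) ∈ G}`. -/
def relAdjoint (G : Set (H × H)) : Set (H × H) :=
  {p : H × H | ∀ q ∈ G, (inner ℂ q.2 p.1 : ℂ) = inner ℂ q.1 p.2}

/-!
Since `ad − bc = 1`, the inverse matrix `(d −b; −c a)` maps `G` back onto the graph of `T`,
so `G` is closed; symmetry comes from
`⟨aTx + bx, cTy + dy⟩ − ⟨cTx + dx, aTy + by⟩ = (ad − bc)(⟨Tx, y⟩ − ⟨x, Ty⟩)`.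
If `T*ξ = λξ`, then `(ξ, μξ) ∈ G^⊛` for `μ = (aλ + b)/(cλ + d)`, and
`Im μ = Im λ / |cλ + d|²`, so each defect space of `T` lies in an eigenspace of `G^⊛` with a
non-real eigenvalue. Simplicity also rules out real eigenvalues of `T` (an eigenvector for a
real eigenvalue is orthogonal to all defect spaces), which is what makes `cTx + dx = 0`
force `x = 0`.
-/

theorem Complex.im_mobius (a b c d : ℝ) (z : ℂ) :
    ((a * z + b) / (c * z + d)).im = (a * d - b * c) * z.im / normSq (c * z + d) := by
  rw [div_im, ← sub_div]
  congr 1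
  simp only [add_im, add_re, mul_im, mul_re, ofReal_re, ofReal_im]
  ring

theorem Complex.mobius_denom_ne_zero {a b c d : ℝ} (hdet : a * d - b * c = 1) {z : ℂ}
    (hz : z.im ≠ 0) : (c : ℂ) * z + d ≠ 0 := by
  intro h
  have hc : c = 0 := by simpa [hz] using congrArg im h
  have hd : d = 0 := by simpa [hc] using congrArg re h
  simp [hc, hd] at hdet

theorem Complex.im_mobius_ne_zero {a b c d : ℝ} (hdet : a * d - b * c = 1) {z : ℂ}
    (hz : z.im ≠ 0) : ((a * z + b) / (c * z + d)).im ≠ 0 := by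
  rw [im_mobius, hdet, one_mul]
  exact div_ne_zero hz (normSq_eq_zero.not.mpr (mobius_denom_ne_zero hdet hz))

section

omit [CompleteSpace H]

variable {T : H →ₗ.[ℂ] H}

theorem eq_zero_of_mobius_eq_zero {c d : ℝ} (hcd : c ≠ 0 ∨ d ≠ 0)
    (hnoeig : ∀ (r : ℝ) (x : T.domain), T x = (r : ℂ) • (x : H) → (x : H) = 0)
    {x : T.domain} (hx : (c : ℂ) • T x + (d : ℂ) • (x : H) = 0) : (x : H) = 0 := by
  by_cases hc : c = 0
  · have hd : d ≠ 0 := hcd.resolve_left (not_not.mpr hc)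
    simpa [hc, hd] using hx
  · refine hnoeig (-(d / c)) x ?_
    have hcC : (c : ℂ) ≠ 0 := ofReal_ne_zero.mpr hc
    rw [← smul_right_injective H hcC |>.eq_iff, smul_smul]
    push_cast
    rw [mul_neg, mul_div_cancel₀ _ hcC, neg_smul]
    exact eq_neg_of_add_eq_zero_left hx

theorem mobiusGraph_snd_eq_of_fst_eq {a b c d : ℝ}
    (hinj : ∀ x : T.domain, (c : ℂ) • T x + (d : ℂ) • (x : H) = 0 → (x : H) = 0)
    {p q : H × H} (hp : p ∈ mobiusGraph T a b c d) (hq : q ∈ mobiusGraph T a b c d)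
    (h : p.1 = q.1) : p.2 = q.2 := by
  obtain ⟨x, rfl⟩ := hp
  obtain ⟨y, rfl⟩ := hq
  have hxy : x - y = 0 := by
    refine Subtype.ext (hinj _ ?_)
    simp only [T.map_sub, Submodule.coe_sub, smul_sub]
    linear_combination (norm := module) h
  rw [sub_eq_zero.mp hxy]

theorem mobiusGraph_inner_symm
    (hsymm : ∀ x y : T.domain, (inner ℂ (T x) ((y : H)) : ℂ) = inner ℂ ((x : H)) (T y))
    {a b c d : ℝ} {p q : H × H} (hp : p ∈ mobiusGraph T a b c d)
    (hq : q ∈ mobiusGraph T a b c d) : (inner ℂ p.2 q.1 : ℂ) = inner ℂ p.1 q.2 := by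
  obtain ⟨x, rfl⟩ := hp
  obtain ⟨y, rfl⟩ := hq
  simp only [inner_add_left, inner_add_right, inner_smul_left, inner_smul_right, conj_ofReal]
  linear_combination ((a : ℂ) * d - (b : ℂ) * c) * hsymm x y

theorem mobiusGraph_eq_preimage_graph {a b c d : ℝ} (hdet : a * d - b * c = 1) :
    mobiusGraph T a b c d = (fun p : H × H =>
      ((a : ℂ) • p.1 - (c : ℂ) • p.2, -(b : ℂ) • p.1 + (d : ℂ) • p.2)) ⁻¹'
      (T.graph : Set (H × H)) := by
  have hdetC : (a : ℂ) * d - b * c = 1 := by exact_mod_cast hdet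
  ext p
  simp only [Set.mem_preimage, SetLike.mem_coe, LinearPMap.mem_graph_iff]
  constructor
  · rintro ⟨x, rfl⟩
    refine ⟨x, ?_, ?_⟩
    · linear_combination (norm := module) (-hdetC) • (x : H)
    · linear_combination (norm := module) (-hdetC) • T x
  · rintro ⟨x, hx, hTx⟩
    refine ⟨x, Prod.ext ?_ ?_⟩
    · dsimp only
      rw [hx, hTx]
      linear_combination (norm := module) (-hdetC) • p.1
    · dsimp only
      rw [hx, hTx]
      linear_combination (norm := module) (-hdetC) • p.2

theorem isClosed_mobiusGraph (hclosed : IsClosed (T.graph : Set (H × H))) {a b c d : ℝ}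
    (hdet : a * d - b * c = 1) : IsClosed (mobiusGraph T a b c d) := by
  rw [mobiusGraph_eq_preimage_graph hdet]
  exact hclosed.preimage (by fun_prop)

end

section

variable {T : H →ₗ.[ℂ] H}

theorem mem_defect_iff {lam : ℂ} {u : H} :
    u ∈ defect T lam ↔ ∃ ξ : T.adjoint.domain, T.adjoint ξ = lam • (ξ : H) ∧ (ξ : H) = u := by
  simp only [defect, Submodule.mem_map, LinearMap.mem_ker, LinearMap.sub_apply,
    LinearMap.smul_apply, Submodule.coe_subtype, sub_eq_zero]
  rfl

theorem inner_apply_eq_mul_of_mem_defect (hdense : Dense (T.domain : Set H)) {lam : ℂ} {u : H}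
    (hu : u ∈ defect T lam) (x : T.domain) :
    (inner ℂ (T x) u : ℂ) = lam * inner ℂ (x : H) u := by
  obtain ⟨ξ, hξ, rfl⟩ := mem_defect_iff.mp hu
  rw [(LinearPMap.adjoint_isFormalAdjoint hdense).symm x ξ, hξ, inner_smul_right]

theorem inner_eq_zero_of_mem_defect (hdense : Dense (T.domain : Set H)) {lam : ℂ}
    (hlam : lam.im ≠ 0) {u : H} (hu : u ∈ defect T lam) {r : ℝ} {x : T.domain}
    (hx : T x = (r : ℂ) • (x : H)) : (inner ℂ (x : H) u : ℂ) = 0 := by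
  have h := inner_apply_eq_mul_of_mem_defect hdense hu x
  rw [hx, inner_smul_left, conj_ofReal, ← sub_eq_zero, ← sub_mul] at h
  refine (mul_eq_zero.mp h).resolve_left fun hr => hlam ?_
  simpa using congrArg im hr

theorem eq_zero_of_apply_eq_ofReal_smul (hdense : Dense (T.domain : Set H))
    (hsimple : Dense ((⨆ lam ∈ {z : ℂ | z.im ≠ 0}, defect T lam : Submodule ℂ H) : Set H))
    {r : ℝ} {x : T.domain} (hx : T x = (r : ℂ) • (x : H)) : (x : H) = 0 := by
  have hle : (⨆ lam ∈ {z : ℂ | z.im ≠ 0}, defect T lam : Submodule ℂ H) ≤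
      LinearMap.ker (innerₛₗ ℂ (x : H)) :=
    iSup₂_le fun _ hlam _ hu => inner_eq_zero_of_mem_defect hdense hlam hu hx
  exact hsimple.eq_zero_of_inner_left ℂ fun v hv => hle hv

theorem mem_relAdjoint_mobiusGraph_of_mem_defect (hdense : Dense (T.domain : Set H))
    {a b c d : ℝ} {lam mu : ℂ} (hmu : mu * (c * lam + d) = a * lam + b) {u : H}
    (hu : u ∈ defect T lam) : (u, mu • u) ∈ relAdjoint (mobiusGraph T a b c d) := by
  rintro q ⟨x, rfl⟩
  simp only [inner_add_left, inner_smul_left, inner_smul_right, conj_ofReal,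
    inner_apply_eq_mul_of_mem_defect hdense hu x]
  linear_combination (-(inner ℂ (x : H) u : ℂ)) * hmu

end

/-- Let `T` be a densely defined closed simple symmetric operator, `a,b,c,d ∈ ℝ` with
`ad − bc = 1`, and `G = {(c·Tx + d·x, a·Tx + b·x) : x ∈ D(T)}`.  Then (1) `cTx + dx = 0`
implies `x = 0`, and `G` is the graph of an operator `S`; (2) `S` is symmetric;
(3) `G` is closed; (4) `S` is simple in the relation sense: the closed linear span of
`⋃_{Im μ ≠ 0} {u : (u, μu) ∈ G^⊛}` is all of `H`. -/
theorem statement18 (T : H →ₗ.[ℂ] H)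
    (hdense : Dense (T.domain : Set H))
    (hclosed : IsClosed (T.graph : Set (H × H)))
    (hsymm : ∀ x y : T.domain, (inner ℂ (T x) ((y : H)) : ℂ) = inner ℂ ((x : H)) (T y))
    (hsimple : Dense ((⨆ lam ∈ {z : ℂ | z.im ≠ 0}, defect T lam : Submodule ℂ H) : Set H))
    (a b c d : ℝ) (hdet : a * d - b * c = 1) :
    ((∀ x : T.domain, (c : ℂ) • T x + (d : ℂ) • (x : H) = 0 → (x : H) = 0) ∧
      ∀ p ∈ mobiusGraph T a b c d, ∀ q ∈ mobiusGraph T a b c d,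
        p.1 = q.1 → p.2 = q.2) ∧
    (∀ p ∈ mobiusGraph T a b c d, ∀ q ∈ mobiusGraph T a b c d,
      (inner ℂ p.2 q.1 : ℂ) = inner ℂ p.1 q.2) ∧
    IsClosed (mobiusGraph T a b c d) ∧
    Dense ((⨆ mu ∈ {z : ℂ | z.im ≠ 0},
        Submodule.span ℂ {u : H | (u, mu • u) ∈ relAdjoint (mobiusGraph T a b c d)} :
      Submodule ℂ H) : Set H) := by
  have hcd : c ≠ 0 ∨ d ≠ 0 := by
    by_contra! h
    simp [h.1, h.2] at hdet
  have hinj : ∀ x : T.domain, (c : ℂ) • T x + (d : ℂ) • (x : H) = 0 → (x : H) = 0 :=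
    fun _ => eq_zero_of_mobius_eq_zero hcd
      fun _ _ => eq_zero_of_apply_eq_ofReal_smul hdense hsimple
  refine ⟨⟨hinj, fun p hp q hq => mobiusGraph_snd_eq_of_fst_eq hinj hp hq⟩,
    fun p hp q hq => mobiusGraph_inner_symm hsymm hp hq, isClosed_mobiusGraph hclosed hdet,
    hsimple.mono (SetLike.coe_subset_coe.mpr (iSup₂_le fun lam hlam => ?_))⟩
  have hmu : (a * lam + b) / (c * lam + d) * (c * lam + d) = a * lam + b :=
    div_mul_cancel₀ _ (mobius_denom_ne_zero hdet hlam)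
  refine le_iSup₂_of_le _ (im_mobius_ne_zero hdet hlam) fun u hu => ?_
  exact Submodule.subset_span (mem_relAdjoint_mobiusGraph_of_mem_defect hdense hmu hu)

end
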